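/- Let X, Y be finite sets with Y = {0,1}, p a joint pmf on X × Y with full-support feature marginal, f : X → X̃, and let q(y|f(x)) denote the posterior of the pushforward. If D_KL(p(y|x) ‖ q(y|f(x))) := ∑_{x,y} p(x,y) log₂( p(y|x) / q(y|f(x)) ) ≤ (2/ln 2)·δ², then R*_{f(X)} − R*_X ≤ δ. -/

import Mathlib

open Finset

/-- Feature marginal of a joint pmf on `X × {0,1}`. -/
noncomputable def marg {X : Type*} (p : X → Bool → ℝ) (x : X) : ℝ := p x false + p x true

/-- Conditional probability `p(y|x)`, with the convention that it is `0`
when the feature marginal vanishes. -/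
noncomputable def condP {X : Type*} (p : X → Bool → ℝ) (x : X) (y : Bool) : ℝ :=
  if marg p x = 0 then 0 else p x y / marg p x

/-- Bayes error `R*_X = ∑_x p(x) (1 - max_y p(y|x))`. -/
noncomputable def bayesError {X : Type*} [Fintype X] (p : X → Bool → ℝ) : ℝ :=
  ∑ x, marg p x * (1 - max (condP p x false) (condP p x true))

/-- Pushforward joint pmf under a deterministic map on the feature coordinate. -/
noncomputable def pushforward {X X' : Type*} [Fintype X] [DecidableEq X']
    (f : X → X') (p : X → Bool → ℝ) (x' : X') (y : Bool) : ℝ :=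
  ∑ x ∈ Finset.univ.filter (fun x => f x = x'), p x y

/-- Conditional KL divergence (in bits) between the posterior of `p` and the
posterior of the pushforward of `p` under `f`. -/
noncomputable def klPosterior {X X' : Type*} [Fintype X] [DecidableEq X']
    (p : X → Bool → ℝ) (f : X → X') : ℝ :=
  ∑ x, ∑ y, p x y * Real.logb 2 (condP p x y / condP (pushforward f p) (f x) y)

/-!
For each `x`, binary Pinsker bounds `2 (p(1|x) - q(1|f x))²` by the KL divergence (in nats)
between the two posteriors, where `q` is the pushforward; weighting by `p(x)` and summing, the
`p`-weighted mean square of the posterior gap is at most `δ²`. Since `q(·|f x)` is constant on the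
fibres of `f`, the Bayes error of `q` is also a `p`-weighted sum over `x`, and as `max` is
1-Lipschitz the difference of the Bayes errors is at most the weighted mean absolute posterior
gap, which Cauchy–Schwarz bounds by `δ`.
-/

section BinaryPinsker

open Real Set

-- Comparing the values at `t = a` and `t = b` gives binary Pinsker when `a ≤ b`.
lemma antitoneOn_mul_log_add_mul_log_one_sub_add_sq {a b : ℝ} (ha : 0 ≤ a) (hb : b < 1) :
    AntitoneOn (fun t => a * log t + (1 - a) * log (1 - t) + 2 * (a - t) ^ 2) (Icc a b) := by
  have hlog : ContinuousOn (fun t => a * log t) (Icc a b) := by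
    rcases ha.eq_or_lt with rfl | ha
    · simpa using continuousOn_const
    · exact continuousOn_const.mul (continuousOn_log.mono fun t ht => (ha.trans_le ht.1).ne')
  have hcont : ContinuousOn (fun t => a * log t + (1 - a) * log (1 - t) + 2 * (a - t) ^ 2)
      (Icc a b) :=
    (hlog.add (continuousOn_const.mul (ContinuousOn.log (f := fun t => 1 - t) (by fun_prop)
      fun t ht => by linarith [ht.2]))).add (by fun_prop)
  refine antitoneOn_of_hasDerivWithinAt_nonpos (f' := fun t => (t - a) * (4 - 1 / (t * (1 - t))))
    (convex_Icc a b) hcont (fun t ht => ?_) (fun t ht => ?_) <;>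
  simp only [interior_Icc] at ht ⊢ <;>
  obtain ⟨ht0, ht1⟩ : 0 < t ∧ 0 < 1 - t := ⟨ha.trans_lt ht.1, by linarith [ht.2]⟩
  · refine HasDerivAt.hasDerivWithinAt ?_
    have := (((hasDerivAt_log ht0.ne').const_mul a).add
      ((((hasDerivAt_id' t).const_sub 1).log ht1.ne').const_mul (1 - a))).add
      (((hasDerivAt_id' t).const_sub a).pow 2 |>.const_mul 2)
    refine this.congr_deriv ?_
    field_simp
    ring
  · have hquarter : t * (1 - t) ≤ 1 / 4 := by nlinarith [sq_nonneg (2 * t - 1)]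
    have : 4 ≤ 1 / (t * (1 - t)) := by
      rw [le_div_iff₀ (by positivity)]; linarith
    exact mul_nonpos_of_nonneg_of_nonpos (by linarith [ht.1]) (by linarith)

-- KL divergence from Bernoulli(b) to Bernoulli(a), in nats.
noncomputable def binaryKL (a b : ℝ) : ℝ := a * log (a / b) + (1 - a) * log ((1 - a) / (1 - b))

lemma mul_log_div_eq_sub {a b : ℝ} (hb : b ≠ 0) : a * log (a / b) = a * log a - a * log b := by
  rcases eq_or_ne a 0 with rfl | ha
  · simp
  · rw [log_div ha hb]; ring

lemma binaryKL_one_sub_one_sub (a b : ℝ) : binaryKL (1 - a) (1 - b) = binaryKL a b := by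
  simp only [binaryKL, sub_sub_cancel]; ring

lemma two_mul_sq_sub_le_binaryKL_of_le {a b : ℝ} (ha : 0 ≤ a) (hab : a ≤ b) (hb₀ : 0 < b)
    (hb : b < 1) :
    2 * (a - b) ^ 2 ≤ binaryKL a b := by
  have h := antitoneOn_mul_log_add_mul_log_one_sub_add_sq ha hb
    (Set.left_mem_Icc.2 hab) (Set.right_mem_Icc.2 hab) hab
  simp only [sub_self] at h
  rw [binaryKL, mul_log_div_eq_sub hb₀.ne', mul_log_div_eq_sub (by linarith)]
  nlinarith

lemma two_mul_sq_sub_le_binaryKL {a b : ℝ} (ha₀ : 0 ≤ a) (ha₁ : a ≤ 1) (hb₀ : 0 ≤ b) (hb₁ : b ≤ 1)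
    (h₀ : b = 0 → a = 0) (h₁ : b = 1 → a = 1) :
    2 * (a - b) ^ 2 ≤ binaryKL a b := by
  rcases hb₀.eq_or_lt with rfl | hb₀
  · simp [h₀ rfl, binaryKL]
  rcases hb₁.eq_or_lt with rfl | hb₁
  · simp [h₁ rfl, binaryKL]
  rcases le_total a b with hab | hba
  · exact two_mul_sq_sub_le_binaryKL_of_le ha₀ hab hb₀ hb₁
  · rw [← binaryKL_one_sub_one_sub]
    convert two_mul_sq_sub_le_binaryKL_of_le (a := 1 - a) (b := 1 - b) (by linarith) (by linarith)
      (by linarith) (by linarith) using 1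
    ring

end BinaryPinsker

section Posterior

variable {X : Type*} {p : X → Bool → ℝ} {x : X}

lemma marg_mul_condP (h : marg p x ≠ 0) (y : Bool) : marg p x * condP p x y = p x y := by
  rw [condP, if_neg h, mul_div_cancel₀ _ h]

lemma condP_false (h : marg p x ≠ 0) : condP p x false = 1 - condP p x true := by
  rw [eq_sub_iff_add_eq, condP, condP, if_neg h, if_neg h, ← add_div]
  exact div_self h

lemma condP_eq_zero_iff (h : marg p x ≠ 0) {y : Bool} : condP p x y = 0 ↔ p x y = 0 := by
  rw [condP, if_neg h, div_eq_zero_iff, or_iff_left h]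

lemma condP_nonneg (hp : ∀ x y, 0 ≤ p x y) (x : X) (y : Bool) : 0 ≤ condP p x y := by
  unfold condP
  split_ifs
  · exact le_rfl
  · exact div_nonneg (hp x y) (add_nonneg (hp x false) (hp x true))

lemma condP_true_le_one (hp : ∀ x y, 0 ≤ p x y) (h : marg p x ≠ 0) : condP p x true ≤ 1 := by
  linarith [condP_false h, condP_nonneg hp x false]

lemma max_condP_sub_max_condP_le {X' : Type*} {q : X' → Bool → ℝ} {x' : X'}
    (hpx : marg p x ≠ 0) (hqx : marg q x' ≠ 0) :
    max (condP p x false) (condP p x true) - max (condP q x' false) (condP q x' true)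
      ≤ |condP p x true - condP q x' true| := by
  have h := abs_max_sub_max_le_max (condP p x false) (condP p x true) (condP q x' false)
    (condP q x' true)
  rw [condP_false hpx, condP_false hqx, sub_sub_sub_cancel_left, abs_sub_comm (condP q x' true),
    max_self] at h
  rw [condP_false hpx, condP_false hqx]
  exact (le_abs_self _).trans h

lemma sum_marg [Fintype X] : ∑ x, marg p x = ∑ x, ∑ y, p x y :=
  sum_congr rfl fun x _ => by rw [Fintype.sum_bool, marg, add_comm]

end Posterior

section PosteriorPinsker

variable {X X' : Type*} {p : X → Bool → ℝ} {q : X' → Bool → ℝ} {x : X} {x' : X'}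

lemma log_two_mul_sum_mul_logb_condP_div (hpx : marg p x ≠ 0) (hqx : marg q x' ≠ 0) :
    Real.log 2 * ∑ y, p x y * Real.logb 2 (condP p x y / condP q x' y)
      = marg p x * binaryKL (condP p x true) (condP q x' true) := by
  rw [Fintype.sum_bool, ← marg_mul_condP hpx true, ← marg_mul_condP hpx false, condP_false hpx,
    condP_false hqx, binaryKL]
  simp only [Real.logb]
  field_simp

lemma two_mul_marg_mul_sq_le_log_two_mul_sum (hp : ∀ x y, 0 ≤ p x y) (hq : ∀ x' y, 0 ≤ q x' y)
    (hpx : marg p x ≠ 0) (hqx : marg q x' ≠ 0) (hpq : ∀ y, q x' y = 0 → p x y = 0) :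
    2 * (marg p x * (condP p x true - condP q x' true) ^ 2)
      ≤ Real.log 2 * ∑ y, p x y * Real.logb 2 (condP p x y / condP q x' y) := by
  have hq₀ : condP q x' true = 0 → condP p x true = 0 := by
    simpa only [condP_eq_zero_iff hpx, condP_eq_zero_iff hqx] using hpq true
  have hq₁ : condP q x' true = 1 → condP p x true = 1 := by
    intro h
    have hqf : condP q x' false = 0 := by rw [condP_false hqx, h, sub_self]
    have hpf := (condP_eq_zero_iff hpx).2 (hpq false ((condP_eq_zero_iff hqx).1 hqf))
    linarith [condP_false hpx]
  rw [log_two_mul_sum_mul_logb_condP_div hpx hqx, mul_left_comm]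
  exact mul_le_mul_of_nonneg_left (two_mul_sq_sub_le_binaryKL (condP_nonneg hp x true)
    (condP_true_le_one hp hpx) (condP_nonneg hq x' true)
    (condP_true_le_one hq hqx) hq₀ hq₁) (add_nonneg (hp x false) (hp x true))

end PosteriorPinsker

section Pushforward

variable {X X' : Type*} [Fintype X] [DecidableEq X'] {f : X → X'} {p : X → Bool → ℝ}

lemma pushforward_nonneg (hp : ∀ x y, 0 ≤ p x y) (x' : X') (y : Bool) :
    0 ≤ pushforward f p x' y :=
  sum_nonneg fun x _ => hp x y

lemma le_pushforward (hp : ∀ x y, 0 ≤ p x y) (x : X) (y : Bool) :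
    p x y ≤ pushforward f p (f x) y :=
  single_le_sum (fun z _ => hp z y) (by simp)

lemma marg_pushforward_pos (hp : ∀ x y, 0 ≤ p x y) {x : X} (hx : 0 < marg p x) :
    0 < marg (pushforward f p) (f x) :=
  hx.trans_le (add_le_add (le_pushforward hp x false) (le_pushforward hp x true))

lemma sum_marg_pushforward_mul [Fintype X'] (g : X' → ℝ) :
    ∑ x', marg (pushforward f p) x' * g x' = ∑ x, marg p x * g (f x) := by
  rw [← sum_fiberwise univ f]
  refine sum_congr rfl fun x' _ => ?_
  simp only [marg, pushforward, ← sum_add_distrib, sum_mul]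
  exact sum_congr rfl fun x hx => by rw [(mem_filter.1 hx).2]

lemma two_mul_sum_marg_mul_sq_le_klPosterior (hp : ∀ x y, 0 ≤ p x y)
    (hfull : ∀ x, 0 < marg p x) :
    2 * ∑ x, marg p x * (condP p x true - condP (pushforward f p) (f x) true) ^ 2
      ≤ Real.log 2 * klPosterior p f := by
  rw [mul_sum, klPosterior, mul_sum]
  exact sum_le_sum fun x _ => two_mul_marg_mul_sq_le_log_two_mul_sum hp (pushforward_nonneg hp)
    (hfull x).ne' (marg_pushforward_pos hp (hfull x)).ne'
    fun y hy => le_antisymm (hy ▸ le_pushforward hp x y) (hp x y)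

variable [Fintype X']

lemma bayesError_pushforward_sub_le (hp : ∀ x y, 0 ≤ p x y) (hfull : ∀ x, 0 < marg p x) :
    bayesError (pushforward f p) - bayesError p
      ≤ ∑ x, marg p x * |condP p x true - condP (pushforward f p) (f x) true| := by
  rw [bayesError, sum_marg_pushforward_mul, bayesError, ← sum_sub_distrib]
  refine sum_le_sum fun x _ => ?_
  rw [← mul_sub, sub_sub_sub_cancel_left]
  exact mul_le_mul_of_nonneg_left (max_condP_sub_max_condP_le (hfull x).ne'
    (marg_pushforward_pos hp (hfull x)).ne') (hfull x).le

end Pushforward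

/-- If the conditional KL divergence is at most `(2/ln 2) δ²`, then `f` is δ-safe. -/
theorem deltaSafe_of_klPosterior_le {X X' : Type*} [Fintype X] [Fintype X'] [DecidableEq X']
    (p : X → Bool → ℝ) (hp : ∀ x y, 0 ≤ p x y) (hsum : ∑ x, ∑ y, p x y = 1)
    (hfull : ∀ x, 0 < marg p x) (f : X → X') (δ : ℝ) (hδ : 0 ≤ δ)
    (hkl : klPosterior p f ≤ (2 / Real.log 2) * δ ^ 2) :
    bayesError (pushforward f p) - bayesError p ≤ δ := by
  set d := fun x => condP p x true - condP (pushforward f p) (f x) true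
  have hsq : ∑ x, marg p x * d x ^ 2 ≤ δ ^ 2 := by
    have hlog := Real.log_pos one_lt_two
    have := (two_mul_sum_marg_mul_sq_le_klPosterior (f := f) hp hfull).trans
      (mul_le_mul_of_nonneg_left hkl hlog.le)
    rw [← mul_assoc, mul_div_cancel₀ _ hlog.ne'] at this
    linarith
  have hCS : (∑ x, marg p x * |d x|) ^ 2 ≤ ∑ x, marg p x * d x ^ 2 := by
    have := sum_sq_le_sum_mul_sum_of_sq_le_mul univ (r := fun x => marg p x * |d x|)
      (fun x _ => (hfull x).le) (fun x _ => mul_nonneg (hfull x).le (sq_nonneg (d x)))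
      fun x _ => le_of_eq (by rw [mul_pow, sq_abs]; ring)
    rwa [sum_marg, hsum, one_mul] at this
  exact (bayesError_pushforward_sub_le hp hfull).trans (le_of_sq_le_sq (hCS.trans hsq) hδ)
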